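/- Let g be the free Lie algebra over ℂ on 2h generators a^1,…,a^h, b_1,…,b_h, bigraded by the a-degree and the b-degree. Suppose c^1,…,c^h ∈ g are each homogeneous of a-degree 1 (each Lie monomial appearing contains exactly one letter from {a^1,…,a^h}), and suppose ∑_{J=1}^h [b_J, c^J] = 0 in g. Then c^J = 0 for all J = 1,…,h. -/

import Mathlib

/-!
Transport everything to the monoid algebra of the free monoid on the letters and compare
coefficients of words in `∑ b_J c^J = ∑ c^J b_J`. Reading off the first and the last letter
gives `c^K(a w) = 0` for every letter `a` that is not a `b`, and `c^K(w b_L) = c^L(b_K w)`. The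
second identity rotates the leading `b`'s of a word to its end, one at a time, until the word
starts with a letter that is not a `b`; every word containing an `a`-letter gets there.
-/

open FreeAlgebra

attribute [local instance 100] LieRing.ofAssociativeRing

theorem FreeMonoid.exists_eq_mul_of_mul_of_mem {σ : Type*} {x : σ} {w : FreeMonoid σ}
    (hx : x ∈ w) : ∃ u v, w = u * FreeMonoid.of x * v := by
  obtain ⟨u, v, huv⟩ := List.append_of_mem (show x ∈ w.toList from hx)
  refine ⟨FreeMonoid.ofList u, FreeMonoid.ofList v, FreeMonoid.toList.injective ?_⟩
  simpa [FreeMonoid.toList_mul] using huv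

namespace MonoidAlgebra

variable {R σ : Type*} [Semiring R]

theorem coeff_single_of_mul_of_mul (x : σ) (f : MonoidAlgebra R (FreeMonoid σ))
    (w : FreeMonoid σ) :
    (single (FreeMonoid.of x) 1 * f).coeff (FreeMonoid.of x * w) = f.coeff w := by
  rw [coeff_single_mul_eq_mul_coeff w (fun _ _ ↦ mul_right_inj _), one_mul]

theorem coeff_single_of_mul_of_mul_of_ne {x y : σ} (hxy : x ≠ y)
    (f : MonoidAlgebra R (FreeMonoid σ)) (w : FreeMonoid σ) :
    (single (FreeMonoid.of x) 1 * f).coeff (FreeMonoid.of y * w) = 0 :=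
  coeff_single_mul_of_forall_mul_ne _ _ fun _ hd ↦ hxy (List.cons.inj hd).1

theorem coeff_mul_single_of_mul_mul_of (x : σ) (f : MonoidAlgebra R (FreeMonoid σ))
    (w : FreeMonoid σ) :
    (f * single (FreeMonoid.of x) 1).coeff (w * FreeMonoid.of x) = f.coeff w := by
  rw [coeff_mul_single_eq_coeff_mul w (fun _ _ ↦ mul_left_inj _), mul_one]

theorem coeff_mul_single_of_mul_mul_of_ne {x y : σ} (hxy : x ≠ y)
    (f : MonoidAlgebra R (FreeMonoid σ)) (w : FreeMonoid σ) :
    (f * single (FreeMonoid.of x) 1).coeff (w * FreeMonoid.of y) = 0 :=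
  coeff_mul_single_of_forall_mul_ne _ _ fun _ hd ↦ hxy <| by
    simpa using congrArg List.getLast? (congrArg FreeMonoid.toList hd)

section SumCommute

variable {β : Type*} [Fintype β] {b : β → σ} {f : β → MonoidAlgebra R (FreeMonoid σ)}

theorem coeff_sum_single_mul_of_mul (hb : b.Injective) (K : β) (w : FreeMonoid σ) :
    (∑ K', single (FreeMonoid.of (b K')) 1 * f K').coeff (FreeMonoid.of (b K) * w) =
      (f K).coeff w := by
  rw [coeff_sum, Finsupp.finsetSum_apply, Finset.sum_eq_single_of_mem K (Finset.mem_univ K)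
      fun K' _ hK' ↦ coeff_single_of_mul_of_mul_of_ne (hb.ne hK') _ _,
    coeff_single_of_mul_of_mul]

theorem coeff_sum_single_mul_of_mul_of_notMem_range {x : σ} (hx : x ∉ Set.range b)
    (w : FreeMonoid σ) :
    (∑ K, single (FreeMonoid.of (b K)) 1 * f K).coeff (FreeMonoid.of x * w) = 0 := by
  rw [coeff_sum, Finsupp.finsetSum_apply]
  exact Finset.sum_eq_zero fun K _ ↦
    coeff_single_of_mul_of_mul_of_ne (fun h ↦ hx ⟨K, h⟩) _ _

theorem coeff_sum_mul_single_mul_of (hb : b.Injective) (K : β) (w : FreeMonoid σ) :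
    (∑ K', f K' * single (FreeMonoid.of (b K')) 1).coeff (w * FreeMonoid.of (b K)) =
      (f K).coeff w := by
  rw [coeff_sum, Finsupp.finsetSum_apply, Finset.sum_eq_single_of_mem K (Finset.mem_univ K)
      fun K' _ hK' ↦ coeff_mul_single_of_mul_mul_of_ne (hb.ne hK') _ _,
    coeff_mul_single_of_mul_mul_of]

variable (hb : b.Injective)
  (hf : ∑ K, single (FreeMonoid.of (b K)) 1 * f K = ∑ K, f K * single (FreeMonoid.of (b K)) 1)
include hb hf

theorem coeff_of_mul_eq_zero_of_notMem_range {x : σ} (hx : x ∉ Set.range b) (K : β)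
    (w : FreeMonoid σ) : (f K).coeff (FreeMonoid.of x * w) = 0 := by
  rw [← coeff_sum_mul_single_mul_of hb, ← hf, mul_assoc,
    coeff_sum_single_mul_of_mul_of_notMem_range hx]

theorem coeff_eq_zero_of_notMem_range {x : σ} (hx : x ∉ Set.range b) (u v : FreeMonoid σ)
    (K : β) : (f K).coeff (u * FreeMonoid.of x * v) = 0 := by
  induction u using FreeMonoid.inductionOn' generalizing v K with
  | one => rw [one_mul, coeff_of_mul_eq_zero_of_notMem_range hb hf hx]
  | of_mul y u ih =>
    by_cases hy : y ∈ Set.range b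
    · obtain ⟨K', rfl⟩ := hy
      rw [← coeff_sum_mul_single_mul_of hb, ← hf]
      simpa only [mul_assoc, coeff_sum_single_mul_of_mul hb] using ih (v * FreeMonoid.of (b K)) K'
    · rw [mul_assoc, mul_assoc, coeff_of_mul_eq_zero_of_notMem_range hb hf hy]

theorem eq_zero_of_sum_single_mul_eq_sum_mul_single
    (hsupp : ∀ K, f K ∈ supported R R {w | ∃ x ∈ w, x ∉ Set.range b}) (K : β) : f K = 0 := by
  ext w
  rw [coeff_zero, Finsupp.coe_zero, Pi.zero_apply]
  by_cases hw : ∃ x ∈ w, x ∉ Set.range b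
  · obtain ⟨x, hxw, hx⟩ := hw
    obtain ⟨u, v, rfl⟩ := FreeMonoid.exists_eq_mul_of_mul_of_mem hxw
    exact coeff_eq_zero_of_notMem_range hb hf hx u v K
  · exact mem_supported'.1 (hsupp K) w hw

end SumCommute

end MonoidAlgebra

namespace FreeAlgebra

variable {R X : Type*} [CommSemiring R]

@[simp]
theorem equivMonoidAlgebraFreeMonoid_ι (x : X) :
    equivMonoidAlgebraFreeMonoid (ι R x) = MonoidAlgebra.single (FreeMonoid.of x) 1 := by
  simp [equivMonoidAlgebraFreeMonoid]

theorem equivMonoidAlgebraFreeMonoid_prod_map_ι (w : List X) :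
    equivMonoidAlgebraFreeMonoid (w.map (ι R)).prod =
      MonoidAlgebra.single (FreeMonoid.ofList w) 1 := by
  induction w with
  | nil => simp [MonoidAlgebra.one_def, FreeMonoid.ofList_nil]
  | cons x w ih => simp [ih, FreeMonoid.ofList_cons]

theorem equivMonoidAlgebraFreeMonoid_mem_supported_of_mem_span {P : List X → Prop}
    {x : FreeAlgebra R X}
    (hx : x ∈ Submodule.span R {y | ∃ w, P w ∧ y = (w.map (ι R)).prod}) :
    equivMonoidAlgebraFreeMonoid x ∈ MonoidAlgebra.supported R R {w | P w.toList} := by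
  rw [MonoidAlgebra.supported_eq_span_single]
  refine Submodule.span_mono ?_
    (Submodule.apply_mem_span_image_of_mem_span equivMonoidAlgebraFreeMonoid.toLinearMap hx)
  rintro _ ⟨_, ⟨w, hw, rfl⟩, rfl⟩
  exact ⟨FreeMonoid.ofList w, hw, (equivMonoidAlgebraFreeMonoid_prod_map_ι w).symm⟩

end FreeAlgebra

theorem stmt_14_general (h : ℕ) (c : Fin h → FreeAlgebra ℂ (Fin h ⊕ Fin h))
    (hdeg : ∀ J, c J ∈ Submodule.span ℂ
        {x : FreeAlgebra ℂ (Fin h ⊕ Fin h) |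
          ∃ w : List (Fin h ⊕ Fin h), w.countP (fun i => i.isLeft) = 1 ∧
            x = (w.map (ι ℂ)).prod})
    (hsum : ∑ J, ⁅ι ℂ (Sum.inr J : Fin h ⊕ Fin h), c J⁆ = 0) :
    ∀ J, c J = 0 := by
  let e : FreeAlgebra ℂ (Fin h ⊕ Fin h) ≃ₐ[ℂ] _ := equivMonoidAlgebraFreeMonoid
  have hcomm : ∑ J, ι ℂ (Sum.inr J) * c J = ∑ J, c J * ι ℂ (Sum.inr J) := by
    simpa only [Ring.lie_def, Finset.sum_sub_distrib, sub_eq_zero] using hsum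
  have hcomm' := congrArg e hcomm
  simp only [map_sum, map_mul, e, equivMonoidAlgebraFreeMonoid_ι] at hcomm'
  have hsupp (J : Fin h) :
      e (c J) ∈ MonoidAlgebra.supported ℂ ℂ {w | ∃ x ∈ w, x ∉ Set.range Sum.inr} := by
    refine MonoidAlgebra.supported_mono ?_
      (equivMonoidAlgebraFreeMonoid_mem_supported_of_mem_span (hdeg J))
    intro w hw
    obtain ⟨x, hxw, hx⟩ := List.countP_pos_iff.1 (hw.symm ▸ Nat.one_pos)
    obtain ⟨m, rfl⟩ := Sum.isLeft_iff.1 hx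
    exact ⟨Sum.inl m, hxw, by simp⟩
  intro J
  exact e.injective <| by
    simpa using MonoidAlgebra.eq_zero_of_sum_single_mul_eq_sum_mul_single
      Sum.inr_injective hcomm' hsupp J

/-- In the free Lie algebra on generators `a^1,…,a^h, b_1,…,b_h` (realized as the Lie
subalgebra of the free associative algebra on `Fin h ⊕ Fin h` generated by the
generators, with `a`'s the left and `b`'s the right summands), if `c^1,…,c^h` are Lie
elements homogeneous of `a`-degree 1 (they lie in the span of the words containing
exactly one `a`-letter) and `∑_J [b_J, c^J] = 0`, then `c^J = 0` for all `J`. -/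
theorem stmt_14 (h : ℕ) (c : Fin h → FreeAlgebra ℂ (Fin h ⊕ Fin h))
    (hLie : ∀ J, c J ∈ LieSubalgebra.lieSpan ℂ (FreeAlgebra ℂ (Fin h ⊕ Fin h))
        (Set.range (ι ℂ)))
    (hdeg : ∀ J, c J ∈ Submodule.span ℂ
        {x : FreeAlgebra ℂ (Fin h ⊕ Fin h) |
          ∃ w : List (Fin h ⊕ Fin h), w.countP (fun i => i.isLeft) = 1 ∧
            x = (w.map (ι ℂ)).prod})
    (hsum : ∑ J, ⁅ι ℂ (Sum.inr J : Fin h ⊕ Fin h), c J⁆ = 0) :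
    ∀ J, c J = 0 :=
  stmt_14_general h c hdeg hsum
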